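/- arXiv:2003.04652 — 3 statements merged into one kernel-verified Lean document; each statement's English description precedes it below -/
import Mathlib

section
/- Let n ≥ 1 and let L be a solvable real Lie algebra with dim L = n + 2 and dim [L,L] = n, and suppose that the Lie algebra H := [L,L] is indecomposable. Then L is decomposable if and only if L is isomorphic as a Lie algebra to ℝ × L̄ (with ℝ the 1-dimensional abelian Lie algebra) for some solvable real Lie algebra L̄ with dim L̄ = n + 1 and with derived algebra [L̄,L̄] isomorphic to H. -/
/-- Componentwise Lie bracket on a binary product. -/
instance prodBracket {L₁ L₂ : Type*} [LieRing L₁] [LieRing L₂] :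
    Bracket (L₁ × L₂) (L₁ × L₂) :=
  ⟨fun x y => (⁅x.1, y.1⁆, ⁅x.2, y.2⁆)⟩

/-- The direct product of two Lie rings. -/
instance prodLieRing {L₁ L₂ : Type*} [LieRing L₁] [LieRing L₂] : LieRing (L₁ × L₂) where
  add_lie x y z := Prod.ext (add_lie x.1 y.1 z.1) (add_lie x.2 y.2 z.2)
  lie_add x y z := Prod.ext (lie_add x.1 y.1 z.1) (lie_add x.2 y.2 z.2)
  lie_self x := Prod.ext (lie_self x.1) (lie_self x.2)
  leibniz_lie x y z := Prod.ext (leibniz_lie x.1 y.1 z.1) (leibniz_lie x.2 y.2 z.2)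

/-- The direct product of two Lie algebras. -/
instance prodLieAlgebra {R : Type*} [CommRing R] {L₁ L₂ : Type*} [LieRing L₁] [LieRing L₂]
    [LieAlgebra R L₁] [LieAlgebra R L₂] : LieAlgebra R (L₁ × L₂) where
  lie_smul t x y := Prod.ext (lie_smul t x.1 y.1) (lie_smul t x.2 y.2)

/-- A real Lie algebra is decomposable if it is isomorphic to the direct product of two
nonzero Lie algebras, and indecomposable otherwise. -/
def Decomposable (L : Type) [LieRing L] [LieAlgebra ℝ L] : Prop :=
  ∃ (L₁ L₂ : Type) (_ : LieRing L₁) (_ : LieAlgebra ℝ L₁) (_ : LieRing L₂) (_ : LieAlgebra ℝ L₂),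
    Nontrivial L₁ ∧ Nontrivial L₂ ∧ Nonempty (L ≃ₗ⁅ℝ⁆ (L₁ × L₂))

attribute [local instance 100] LieRing.ofAssociativeRing

/-!
If `L ≅ L₁ × L₂` with both factors nonzero, then `[L, L] ≅ [L₁, L₁] × [L₂, L₂]`, so since
`[L, L]` is indecomposable one factor, say `L₂`, is abelian and `[L, L] ≅ [L₁, L₁]`. As `L₁` is
solvable, `dim [L₁, L₁] < dim L₁`; with `dim L₁ + dim L₂ = n + 2` and `dim [L₁, L₁] = n` this
forces `dim L₂ = 1`, so `L₂ ≅ ℝ`.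
-/

open LieAlgebra Module

section

variable {R L L₁ L₂ M N : Type*} [CommRing R] [LieRing L] [LieAlgebra R L]
  [LieRing L₁] [LieAlgebra R L₁] [LieRing L₂] [LieAlgebra R L₂]
  [LieRing M] [LieAlgebra R M] [LieRing N] [LieAlgebra R N]

theorem LieEquiv.apply_mem_derivedSeries_iff (e : L ≃ₗ⁅R⁆ M) (k : ℕ) {x : L} :
    e x ∈ derivedSeries R M k ↔ x ∈ derivedSeries R L k := by
  refine ⟨fun hx => ?_, fun hx => ?_⟩
  · rw [← LieIdeal.derivedSeries_map_eq k e.symm.surjective]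
    simpa using LieIdeal.mem_map (f := e.symm.toLieHom) hx
  · rw [← LieIdeal.derivedSeries_map_eq k e.surjective]
    exact LieIdeal.mem_map hx

theorem mem_derivedSeries_prod_iff (k : ℕ) {x : L₁ × L₂} :
    x ∈ derivedSeries R (L₁ × L₂) k ↔
      x.1 ∈ derivedSeries R L₁ k ∧ x.2 ∈ derivedSeries R L₂ k := by
  refine ⟨fun hx => ⟨?_, ?_⟩, fun ⟨h₁, h₂⟩ => ?_⟩
  · exact LieIdeal.derivedSeries_map_le (f := LieHom.fst R L₁ L₂) k (LieIdeal.mem_map hx)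
  · exact LieIdeal.derivedSeries_map_le (f := LieHom.snd R L₁ L₂) k (LieIdeal.mem_map hx)
  · rw [← Prod.fst_add_snd x]
    exact add_mem
      (LieIdeal.derivedSeries_map_le (f := LieHom.inl R L₁ L₂) k (LieIdeal.mem_map h₁))
      (LieIdeal.derivedSeries_map_le (f := LieHom.inr R L₁ L₂) k (LieIdeal.mem_map h₂))

def LieEquiv.derivedSeriesProd (e : L ≃ₗ⁅R⁆ L₁ × L₂) (k : ℕ) :
    derivedSeries R L k ≃ₗ⁅R⁆ derivedSeries R L₁ k × derivedSeries R L₂ k where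
  toFun x :=
    have h := (mem_derivedSeries_prod_iff k).1 ((e.apply_mem_derivedSeries_iff k).2 x.2)
    (⟨(e x).1, h.1⟩, ⟨(e x).2, h.2⟩)
  invFun y := ⟨e.symm (y.1, y.2), (e.apply_mem_derivedSeries_iff k).1 <| by
    simp [mem_derivedSeries_prod_iff, y.1.2, y.2.2]⟩
  left_inv x := by ext; simp
  right_inv y := by ext <;> simp
  map_add' x y := by ext <;> simp
  map_smul' t x := by ext <;> simp
  map_lie' := by intro x y; ext <;> simp [LieEquiv.map_lie]

def LieEquiv.prodCongr (e₁ : L₁ ≃ₗ⁅R⁆ M) (e₂ : L₂ ≃ₗ⁅R⁆ N) :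
    (L₁ × L₂) ≃ₗ⁅R⁆ (M × N) where
  __ := e₁.toLinearEquiv.prodCongr e₂.toLinearEquiv
  map_lie' := by intro x y; ext <;> simp [LieEquiv.map_lie]

def LieEquiv.prodOfSubsingleton [Subsingleton N] : (M × N) ≃ₗ⁅R⁆ M where
  toFun := Prod.fst
  invFun m := (m, 0)
  left_inv _ := Prod.ext rfl (Subsingleton.elim _ _)
  right_inv _ := rfl
  map_add' _ _ := rfl
  map_smul' _ _ := rfl
  map_lie' := rfl

theorem LieAlgebra.isLieAbelian_of_subsingleton_derivedSeries
    [Subsingleton (derivedSeries R L 1)] : IsLieAbelian L where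
  trivial x y :=
    have hxy : ⁅x, y⁆ ∈ derivedSeries R L 1 := LieSubmodule.lie_mem_lie trivial trivial
    congrArg Subtype.val (Subsingleton.elim (⟨_, hxy⟩ : derivedSeries R L 1) 0)

end

section

variable {K L : Type*} [Field K] [LieRing L] [LieAlgebra K L]

theorem LieAlgebra.finrank_derivedSeries_one_lt [FiniteDimensional K L] [IsSolvable L]
    [Nontrivial L] : finrank K (derivedSeries K L 1) < finrank K L := by
  refine Submodule.finrank_lt fun h => (derivedSeries_lt_top_of_solvable K L).ne ?_
  exact LieSubmodule.toSubmodule_injective h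

theorem LieAlgebra.nonempty_lieEquiv_self_of_finrank_eq_one [IsLieAbelian L]
    (h : finrank K L = 1) : Nonempty (L ≃ₗ⁅K⁆ K) := by
  have : FiniteDimensional K L := Module.finite_of_finrank_eq_succ h
  obtain ⟨φ⟩ :=
    FiniteDimensional.nonempty_linearEquiv_of_finrank_eq (h.trans (finrank_self K).symm)
  exact ⟨{ φ with map_lie' := by intro x y; simp [trivial_lie_zero, Ring.lie_def, mul_comm] }⟩

end

theorem LieEquiv.split_off_scalars_of_subsingleton_derivedSeries {K : Type*} [Field K] {n : ℕ}
    {L L₁ L₂ : Type*} [LieRing L] [LieAlgebra K L] [LieRing L₁] [LieAlgebra K L₁]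
    [LieRing L₂] [LieAlgebra K L₂] [FiniteDimensional K L] [IsSolvable L]
    [Nontrivial L₁] [Nontrivial L₂] [Subsingleton (derivedSeries K L₂ 1)]
    (hdim : finrank K L = n + 2) (hHdim : finrank K (derivedSeries K L 1) = n)
    (e : L ≃ₗ⁅K⁆ L₁ × L₂) :
    IsSolvable L₁ ∧ finrank K L₁ = n + 1 ∧
      Nonempty (derivedSeries K L₁ 1 ≃ₗ⁅K⁆ derivedSeries K L 1) ∧
      Nonempty (L ≃ₗ⁅K⁆ K × L₁) := by
  have : FiniteDimensional K (L₁ × L₂) := Module.Finite.equiv e.toLinearEquiv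
  have : FiniteDimensional K L₁ :=
    Module.Finite.of_surjective (LinearMap.fst K L₁ L₂) Prod.fst_surjective
  have : FiniteDimensional K L₂ :=
    Module.Finite.of_surjective (LinearMap.snd K L₁ L₂) Prod.snd_surjective
  have : IsSolvable L₁ :=
    Function.Surjective.lieAlgebra_isSolvable (f := (LieHom.fst K L₁ L₂).comp e.toLieHom)
      ((LieHom.fst_surjective (R := K)).comp e.surjective)
  have : IsLieAbelian L₂ := isLieAbelian_of_subsingleton_derivedSeries (R := K)
  let E := (e.derivedSeriesProd 1).trans LieEquiv.prodOfSubsingleton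
  have hsum : finrank K L₁ + finrank K L₂ = n + 2 := by
    rw [← finrank_prod, ← e.toLinearEquiv.finrank_eq, hdim]
  have hD₁ : finrank K (derivedSeries K L₁ 1) = n := E.toLinearEquiv.finrank_eq.symm.trans hHdim
  have := finrank_derivedSeries_one_lt (K := K) (L := L₁)
  have := finrank_pos (R := K) (M := L₂)
  obtain ⟨ψ⟩ := nonempty_lieEquiv_self_of_finrank_eq_one (K := K) (L := L₂) (by omega)
  exact ⟨‹_›, by omega, ⟨E.symm⟩,
    ⟨(e.trans (LieEquiv.prodComm K L₁ L₂)).trans (ψ.prodCongr LieEquiv.refl)⟩⟩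

theorem stmt11_general (n : ℕ) (L : Type) [LieRing L] [LieAlgebra ℝ L]
    [FiniteDimensional ℝ L] [LieAlgebra.IsSolvable L]
    (hdim : Module.finrank ℝ L = n + 2)
    (H : LieIdeal ℝ L) (hH : H = LieAlgebra.derivedSeries ℝ L 1)
    (hHdim : Module.finrank ℝ ↥H = n)
    (hind : ¬ Decomposable ↥H) :
    Decomposable L ↔
      ∃ (L' : Type) (_ : LieRing L') (_ : LieAlgebra ℝ L'),
        LieAlgebra.IsSolvable L' ∧ Module.finrank ℝ L' = n + 1 ∧
        Nonempty (↥(LieAlgebra.derivedSeries ℝ L' 1) ≃ₗ⁅ℝ⁆ ↥H) ∧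
        Nonempty (L ≃ₗ⁅ℝ⁆ (ℝ × L')) := by
  subst hH
  constructor
  · rintro ⟨L₁, L₂, _, _, _, _, _, _, ⟨e⟩⟩
    have hD :
        Subsingleton (derivedSeries ℝ L₁ 1) ∨ Subsingleton (derivedSeries ℝ L₂ 1) := by
      by_contra! h
      exact hind ⟨_, _, _, _, _, _, h.1, h.2, ⟨e.derivedSeriesProd 1⟩⟩
    rcases hD with hD | hD
    · exact ⟨L₂, _, _,
        (e.trans (LieEquiv.prodComm ℝ L₁ L₂)).split_off_scalars_of_subsingleton_derivedSeries
          hdim hHdim⟩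
    · exact ⟨L₁, _, _, e.split_off_scalars_of_subsingleton_derivedSeries hdim hHdim⟩
  · rintro ⟨L', _, _, -, hdim', -, ⟨e⟩⟩
    have : Nontrivial L' := Module.nontrivial_of_finrank_pos (R := ℝ) (by omega)
    exact ⟨ℝ, L', _, _, _, _, inferInstance, this, ⟨e⟩⟩

/-- Let `L` be solvable with `dim L = n + 2` (`n ≥ 1`), `dim [L,L] = n`, and suppose the
Lie algebra `H := [L,L]` is indecomposable. Then `L` is decomposable iff `L ≅ ℝ × L'`
for some solvable Lie algebra `L'` with `dim L' = n + 1` and `[L',L'] ≅ H`. -/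
theorem stmt11 (n : ℕ) (hn : 1 ≤ n) (L : Type) [LieRing L] [LieAlgebra ℝ L]
    [FiniteDimensional ℝ L] [LieAlgebra.IsSolvable L]
    (hdim : Module.finrank ℝ L = n + 2)
    (H : LieIdeal ℝ L) (hH : H = LieAlgebra.derivedSeries ℝ L 1)
    (hHdim : Module.finrank ℝ ↥H = n)
    (hind : ¬ Decomposable ↥H) :
    Decomposable L ↔
      ∃ (L' : Type) (_ : LieRing L') (_ : LieAlgebra ℝ L'),
        LieAlgebra.IsSolvable L' ∧ Module.finrank ℝ L' = n + 1 ∧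
        Nonempty (↥(LieAlgebra.derivedSeries ℝ L' 1) ≃ₗ⁅ℝ⁆ ↥H) ∧
        Nonempty (L ≃ₗ⁅ℝ⁆ (ℝ × L')) :=
  stmt11_general n L hdim H hH hHdim hind
end

section
/- Let n ≥ 2 and let L be a solvable real Lie algebra with dim L = n + 2 whose derived algebra H := [L,L] is abelian of dimension n, and let z, y ∈ L be such that L = ℝz ⊕ ℝy ⊕ H as vector spaces and [y, x] = 0 for all x ∈ H. Then L is decomposable if and only if the linear endomorphism of H given by x ↦ [z, x] is bijective. -/
/-!
Write `D = [L, L]`. As `D` is abelian and `[y, D] = 0`, the kernel of `ad z` on `D` consists of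
the central elements of `L` lying in `D`.

If `L ≅ L₁ × L₂` with nonzero factors, then `[L₁ × L₂, L₁ × L₂] = [L₁, L₁] × [L₂, L₂]`; the two
codimensions add up to 2 and are positive by solvability, so each `[Lᵢ, Lᵢ]` has codimension one,
say `Lᵢ = ℝ uᵢ ⊕ [Lᵢ, Lᵢ]`.
Then `[Lᵢ, Lᵢ] = [uᵢ, [Lᵢ, Lᵢ]]`, so `ad uᵢ` is bijective on `[Lᵢ, Lᵢ]` and no nonzero element of
`[Lᵢ, Lᵢ]` is central. Hence `ad z` is injective on `D`.

Conversely, if `ad z` maps `D` onto itself, choose `x ∈ D` with `[z, x] = [y, z]`. Then `y + x` is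
central, and `L = ℝ (y + x) ⊕ (ℝ z ⊕ D)` is a direct sum of two nonzero ideals.
-/

open Module LieAlgebra

theorem Submodule.finrank_prod {K V W : Type*} [DivisionRing K] [AddCommGroup V] [Module K V]
    [AddCommGroup W] [Module K W] (p : Submodule K V) (q : Submodule K W)
    [FiniteDimensional K p] [FiniteDimensional K q] :
    finrank K (p.prod q) = finrank K p + finrank K q := by
  rw [← p.range_subtype, ← q.range_subtype, ← LinearMap.range_prodMap,
    LinearMap.finrank_range_of_inj (p.injective_subtype.prodMap q.injective_subtype),
    Module.finrank_prod, p.range_subtype, q.range_subtype]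

theorem Submodule.isCompl_of_codisjoint_of_finrank_add_le {K V : Type*} [DivisionRing K]
    [AddCommGroup V] [Module K V] [FiniteDimensional K V] {s t : Submodule K V}
    (hst : Codisjoint s t) (hdim : finrank K s + finrank K t ≤ finrank K V) : IsCompl s t := by
  refine ⟨?_, hst⟩
  have := s.finrank_sup_add_finrank_inf_eq t
  rw [hst.eq_top, finrank_top] at this
  rw [disjoint_iff, ← Submodule.finrank_eq_zero]
  omega

namespace LieAlgebra

section CommRing

variable {R L L' : Type*} [CommRing R] [LieRing L] [LieAlgebra R L] [LieRing L']
  [LieAlgebra R L']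

theorem lie_eq_zero_of_derivedSeries_two_eq_bot (hab : derivedSeries R L 2 = ⊥) {a b : L}
    (ha : a ∈ derivedSeries R L 1) (hb : b ∈ derivedSeries R L 1) : ⁅a, b⁆ = 0 := by
  have : ⁅a, b⁆ ∈ derivedSeries R L 2 := by
    rw [derivedSeries_def, derivedSeriesOfIdeal_succ]
    exact LieSubmodule.lie_mem_lie ha hb
  rw [hab] at this
  exact (LieSubmodule.mem_bot _).1 this

theorem derivedSeries_eq_bot_of_surjective {f : L →ₗ⁅R⁆ L'} (hf : Function.Surjective f)
    {k : ℕ} (h : derivedSeries R L k = ⊥) : derivedSeries R L' k = ⊥ := by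
  rw [← LieIdeal.derivedSeries_map_eq k hf, h, LieIdeal.map_eq_bot_iff]
  exact bot_le

theorem mem_center_of_lie_eq_zero {z y c : L} {p : Submodule R L}
    (hsup : R ∙ z ⊔ R ∙ y ⊔ p = ⊤) (hz : ⁅c, z⁆ = 0) (hy : ⁅c, y⁆ = 0)
    (hp : ∀ x ∈ p, ⁅c, x⁆ = 0) : c ∈ center R L := by
  have hker : ⊤ ≤ LinearMap.ker (ad R L c) := by
    rw [← hsup]
    refine sup_le (sup_le ?_ ?_) fun x hx => hp x hx <;>
      simpa [Submodule.span_singleton_le_iff_mem]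
  exact (LieModule.mem_maxTrivSubmodule R L L c).2 fun a => by
    rw [← lie_skew, neg_eq_zero]
    exact hker Submodule.mem_top

section Prod

variable {L₁ L₂ : Type*} [LieRing L₁] [LieAlgebra R L₁] [LieRing L₂] [LieAlgebra R L₂]

theorem mem_derivedSeries_prod_iff (k : ℕ) {x : L₁ × L₂} :
    x ∈ derivedSeries R (L₁ × L₂) k ↔
      x.1 ∈ derivedSeries R L₁ k ∧ x.2 ∈ derivedSeries R L₂ k := by
  refine ⟨fun hx => ⟨?_, ?_⟩, fun ⟨h₁, h₂⟩ => ?_⟩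
  · rw [← LieIdeal.derivedSeries_map_eq k (f := LieHom.fst R L₁ L₂) Prod.fst_surjective]
    exact LieIdeal.mem_map hx
  · rw [← LieIdeal.derivedSeries_map_eq k (f := LieHom.snd R L₁ L₂) Prod.snd_surjective]
    exact LieIdeal.mem_map hx
  · have h₁' := LieIdeal.derivedSeries_map_le k (LieIdeal.mem_map (f := LieHom.inl R L₁ L₂) h₁)
    have h₂' := LieIdeal.derivedSeries_map_le k (LieIdeal.mem_map (f := LieHom.inr R L₁ L₂) h₂)
    simpa using add_mem h₁' h₂'

theorem center_inf_derivedSeries_prod_eq_bot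
    (h₁ : center R L₁ ⊓ derivedSeries R L₁ 1 = ⊥)
    (h₂ : center R L₂ ⊓ derivedSeries R L₂ 1 = ⊥) :
    center R (L₁ × L₂) ⊓ derivedSeries R (L₁ × L₂) 1 = ⊥ := by
  rw [eq_bot_iff]
  intro x hx
  obtain ⟨hxc, hxD⟩ := (LieSubmodule.mem_inf _ _ x).1 hx
  rw [LieModule.mem_maxTrivSubmodule] at hxc
  obtain ⟨hxD₁, hxD₂⟩ := (mem_derivedSeries_prod_iff 1).1 hxD
  have hx₁ : x.1 ∈ center R L₁ ⊓ derivedSeries R L₁ 1 :=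
    ⟨(LieModule.mem_maxTrivSubmodule R L₁ L₁ _).2 fun a => congrArg Prod.fst (hxc (a, 0)), hxD₁⟩
  have hx₂ : x.2 ∈ center R L₂ ⊓ derivedSeries R L₂ 1 :=
    ⟨(LieModule.mem_maxTrivSubmodule R L₂ L₂ _).2 fun a => congrArg Prod.snd (hxc (0, a)), hxD₂⟩
  rw [h₁, LieSubmodule.mem_bot] at hx₁
  rw [h₂, LieSubmodule.mem_bot] at hx₂
  exact (LieSubmodule.mem_bot x).2 (Prod.ext hx₁ hx₂)

end Prod

end CommRing

section Field

variable {K L : Type*} [Field K] [LieRing L] [LieAlgebra K L]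

theorem finrank_derivedSeries_prod {L₁ L₂ : Type*} [LieRing L₁] [LieAlgebra K L₁] [LieRing L₂]
    [LieAlgebra K L₂] [FiniteDimensional K L₁] [FiniteDimensional K L₂] (k : ℕ) :
    finrank K (derivedSeries K (L₁ × L₂) k) =
      finrank K (derivedSeries K L₁ k) + finrank K (derivedSeries K L₂ k) := by
  have : (derivedSeries K (L₁ × L₂) k).toSubmodule =
      (derivedSeries K L₁ k).toSubmodule.prod (derivedSeries K L₂ k).toSubmodule :=
    Submodule.ext fun _ => mem_derivedSeries_prod_iff k
  exact (congrArg (fun p : Submodule K (L₁ × L₂) => finrank K p) this).trans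
    (Submodule.finrank_prod _ _)

variable (K L) in
theorem finrank_derivedSeries_lt [FiniteDimensional K L] [IsSolvable L] [Nontrivial L] :
    finrank K (derivedSeries K L 1) < finrank K L :=
  Submodule.finrank_lt <| mt (LieSubmodule.toSubmodule_eq_top _).1
    (derivedSeries_lt_top_of_solvable K L).ne

theorem center_inf_derivedSeries_eq_bot_of_finrank_eq_add_one [FiniteDimensional K L]
    (hcodim : finrank K L = finrank K (derivedSeries K L 1) + 1)
    (hab : derivedSeries K L 2 = ⊥) : center K L ⊓ derivedSeries K L 1 = ⊥ := by
  set D := derivedSeries K L 1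
  have hlt : finrank K D.toSubmodule < finrank K L := by
    change finrank K D < _
    omega
  obtain ⟨u, -, hu⟩ := SetLike.exists_of_lt (Submodule.lt_top_of_finrank_lt_finrank hlt)
  have hspan : D.toSubmodule ⊔ K ∙ u = ⊤ := by
    rw [Submodule.sup_span_singleton_eq_top_iff hu]
    have := D.toSubmodule.finrank_quotient_add_finrank
    change _ + finrank K D = _ at this
    omega
  have hmem : ∀ a, ∃ d ∈ D, ∃ t : K, a = d + t • u := fun a => by
    obtain ⟨d, hd, v, hv, rfl⟩ := Submodule.mem_sup.mp (hspan ▸ Submodule.mem_top (x := a))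
    obtain ⟨t, rfl⟩ := Submodule.mem_span_singleton.mp hv
    exact ⟨d, hd, t, rfl⟩
  let T : D →ₗ[K] D := LieModule.toEnd K L D u
  have hT : Function.Surjective T := by
    suffices D.toSubmodule ≤ LinearMap.range (D.toSubmodule.subtype ∘ₗ T) by
      intro d
      obtain ⟨d', hd'⟩ := this d.2
      exact ⟨d', Subtype.ext hd'⟩
    refine (coe_derivedSeries_one_eq K L).trans_le (Submodule.span_le.2 ?_)
    rintro _ ⟨a, b, rfl⟩
    obtain ⟨d, hd, s, rfl⟩ := hmem a
    obtain ⟨d', hd', t, rfl⟩ := hmem b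
    refine ⟨s • ⟨d', hd'⟩ - t • ⟨d, hd⟩, ?_⟩
    change ⁅u, s • d' - t • d⁆ = _
    simp only [lie_sub, lie_smul, add_lie, lie_add, smul_lie, lie_self,
      lie_eq_zero_of_derivedSeries_two_eq_bot hab hd hd']
    rw [← lie_skew d u]
    module
  rw [eq_bot_iff]
  rintro x ⟨hxc, hxD⟩
  have hx : T ⟨x, hxD⟩ = 0 := Subtype.ext ((LieModule.mem_maxTrivSubmodule K L L x).1 hxc u)
  have := LinearMap.injective_iff_surjective.mpr hT (hx.trans T.map_zero.symm)
  exact (LieSubmodule.mem_bot x).2 (congrArg Subtype.val this)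

end Field

end LieAlgebra

theorem LieEquiv.center_inf_derivedSeries_eq_bot {R L L' : Type*} [CommRing R] [LieRing L]
    [LieAlgebra R L] [LieRing L'] [LieAlgebra R L'] (e : L ≃ₗ⁅R⁆ L')
    (h : center R L' ⊓ derivedSeries R L' 1 = ⊥) : center R L ⊓ derivedSeries R L 1 = ⊥ := by
  rw [eq_bot_iff]
  intro x hx
  obtain ⟨hxc, hxD⟩ := (LieSubmodule.mem_inf _ _ x).1 hx
  have hex : e x ∈ center R L' ⊓ derivedSeries R L' 1 := by
    refine ⟨(LieModule.mem_maxTrivSubmodule R L' L' _).2 fun a => ?_, ?_⟩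
    · rw [← e.apply_symm_apply a, ← LieEquiv.map_lie,
        (LieModule.mem_maxTrivSubmodule R L L x).1 hxc, map_zero]
    · rw [← LieIdeal.derivedSeries_map_eq 1 e.surjective]
      exact LieIdeal.mem_map hxD
  rw [h, LieSubmodule.mem_bot, map_eq_zero_iff e e.injective] at hex
  exact (LieSubmodule.mem_bot x).2 hex

theorem LieEquiv.finrank_derivedSeries {K L L' : Type*} [Field K] [LieRing L] [LieAlgebra K L]
    [LieRing L'] [LieAlgebra K L'] (e : L ≃ₗ⁅K⁆ L') (k : ℕ) :
    finrank K (derivedSeries K L' k) = finrank K (derivedSeries K L k) := by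
  have : (derivedSeries K L' k).toSubmodule =
      (derivedSeries K L k).toSubmodule.map e.toLinearEquiv.toLinearMap := by
    rw [← LieIdeal.derivedSeries_map_eq k (f := e.toLieHom) e.surjective,
      LieIdeal.coe_map_of_surjective e.surjective]
    rfl
  exact (congrArg (fun p : Submodule K L' => finrank K p) this).trans
    (e.toLinearEquiv.finrank_map_eq _)

theorem Decomposable.center_inf_derivedSeries_eq_bot {L : Type} [LieRing L] [LieAlgebra ℝ L]
    [FiniteDimensional ℝ L] [IsSolvable L] (hL : Decomposable L)
    (hcodim : finrank ℝ L = finrank ℝ (derivedSeries ℝ L 1) + 2)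
    (hab : derivedSeries ℝ L 2 = ⊥) : center ℝ L ⊓ derivedSeries ℝ L 1 = ⊥ := by
  obtain ⟨L₁, L₂, _, _, _, _, _, _, ⟨e⟩⟩ := hL
  have : FiniteDimensional ℝ (L₁ × L₂) := Module.Finite.equiv e.toLinearEquiv
  have : FiniteDimensional ℝ L₁ :=
    Module.Finite.of_surjective (LinearMap.fst ℝ L₁ L₂) Prod.fst_surjective
  have : FiniteDimensional ℝ L₂ :=
    Module.Finite.of_surjective (LinearMap.snd ℝ L₁ L₂) Prod.snd_surjective
  have hf₁ : Function.Surjective ((LieHom.fst ℝ L₁ L₂).comp e.toLieHom) :=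
    Prod.fst_surjective.comp e.surjective
  have hf₂ : Function.Surjective ((LieHom.snd ℝ L₁ L₂).comp e.toLieHom) :=
    Prod.snd_surjective.comp e.surjective
  have : IsSolvable L₁ := hf₁.lieAlgebra_isSolvable
  have : IsSolvable L₂ := hf₂.lieAlgebra_isSolvable
  have hlt₁ := finrank_derivedSeries_lt ℝ L₁
  have hlt₂ := finrank_derivedSeries_lt ℝ L₂
  have hsum : finrank ℝ L₁ + finrank ℝ L₂ =
      finrank ℝ (derivedSeries ℝ L₁ 1) + finrank ℝ (derivedSeries ℝ L₂ 1) + 2 := by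
    rw [← Module.finrank_prod, ← e.toLinearEquiv.finrank_eq, hcodim,
      ← finrank_derivedSeries_prod, e.finrank_derivedSeries]
  refine e.center_inf_derivedSeries_eq_bot (center_inf_derivedSeries_prod_eq_bot ?_ ?_)
  · exact center_inf_derivedSeries_eq_bot_of_finrank_eq_add_one (by omega)
      (derivedSeries_eq_bot_of_surjective hf₁ hab)
  · exact center_inf_derivedSeries_eq_bot_of_finrank_eq_add_one (by omega)
      (derivedSeries_eq_bot_of_surjective hf₂ hab)

theorem decomposable_of_isCompl {L : Type} [LieRing L] [LieAlgebra ℝ L] (I J : LieIdeal ℝ L)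
    (h : IsCompl I.toSubmodule J.toSubmodule) (hI : I ≠ ⊥) (hJ : J ≠ ⊥) : Decomposable L := by
  have hIJ : ∀ a ∈ I, ∀ b ∈ J, ⁅a, b⁆ = 0 := fun a ha b hb =>
    (Submodule.disjoint_def.1 h.disjoint) _ (lie_mem_left ℝ L I a b ha) (lie_mem_right ℝ L J a b hb)
  let e : (I × J) ≃ₗ⁅ℝ⁆ L :=
    { Submodule.prodEquivOfIsCompl _ _ h with
      map_lie' := by
        rintro ⟨⟨a, ha⟩, ⟨b, hb⟩⟩ ⟨⟨a', ha'⟩, ⟨b', hb'⟩⟩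
        change ⁅a, a'⁆ + ⁅b, b'⁆ = ⁅a + b, a' + b'⁆
        rw [lie_add, add_lie, add_lie, hIJ a ha b' hb', ← lie_skew b a', hIJ a' ha' b hb]
        abel }
  exact ⟨I, J, _, _, _, _, (LieSubmodule.nontrivial_iff_ne_bot ℝ L L).2 hI,
    (LieSubmodule.nontrivial_iff_ne_bot ℝ L L).2 hJ, ⟨e.symm⟩⟩

theorem decomposable_of_isCompl_of_le_center {L : Type} [LieRing L] [LieAlgebra ℝ L]
    {p q : Submodule ℝ L} (hp : p ≤ (center ℝ L).toSubmodule)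
    (hq : (derivedSeries ℝ L 1).toSubmodule ≤ q) (h : IsCompl p q) (hp₀ : p ≠ ⊥) (hq₀ : q ≠ ⊥) :
    Decomposable L := by
  let I : LieIdeal ℝ L :=
    { p with
      lie_mem := fun {x m} hm => by
        rw [(LieModule.mem_maxTrivSubmodule ℝ L L m).1 (hp hm) x]
        exact p.zero_mem }
  let J : LieIdeal ℝ L :=
    { q with lie_mem := fun {x m} _ => hq (LieSubmodule.lie_mem_lie (LieSubmodule.mem_top x)
        (LieSubmodule.mem_top m)) }
  exact decomposable_of_isCompl I J h (fun hI => hp₀ (congrArg LieSubmodule.toSubmodule hI))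
    (fun hJ => hq₀ (congrArg LieSubmodule.toSubmodule hJ))

section DerivedAbelianCodimTwo

variable {L : Type} [LieRing L] [LieAlgebra ℝ L] [FiniteDimensional ℝ L] {z y : L}

theorem injective_toEnd_of_decomposable [IsSolvable L] (hL : Decomposable L)
    (hcodim : finrank ℝ L = finrank ℝ (derivedSeries ℝ L 1) + 2)
    (hab : derivedSeries ℝ L 2 = ⊥)
    (hsup : ℝ ∙ z ⊔ ℝ ∙ y ⊔ (derivedSeries ℝ L 1).toSubmodule = ⊤)
    (hy : ∀ x ∈ derivedSeries ℝ L 1, ⁅y, x⁆ = 0) :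
    Function.Injective (LieModule.toEnd ℝ L (derivedSeries ℝ L 1) z) := by
  rw [← LinearMap.ker_eq_bot, eq_bot_iff]
  rintro ⟨x, hx⟩ hzx
  replace hzx : ⁅z, x⁆ = 0 := congrArg Subtype.val hzx
  have hxc : x ∈ center ℝ L := mem_center_of_lie_eq_zero hsup
    (by rw [← lie_skew, hzx, neg_zero]) (by rw [← lie_skew, hy x hx, neg_zero])
    fun _ hh => lie_eq_zero_of_derivedSeries_two_eq_bot hab hx hh
  have := (LieSubmodule.mem_inf _ _ x).2 ⟨hxc, hx⟩
  rw [hL.center_inf_derivedSeries_eq_bot hcodim hab, LieSubmodule.mem_bot] at this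
  exact (Submodule.mem_bot ℝ).2 (Subtype.ext this)

theorem decomposable_of_surjective_toEnd
    (hcodim : finrank ℝ L = finrank ℝ (derivedSeries ℝ L 1) + 2)
    (hab : derivedSeries ℝ L 2 = ⊥)
    (hsup : ℝ ∙ z ⊔ ℝ ∙ y ⊔ (derivedSeries ℝ L 1).toSubmodule = ⊤)
    (hy : ∀ x ∈ derivedSeries ℝ L 1, ⁅y, x⁆ = 0)
    (hz : Function.Surjective (LieModule.toEnd ℝ L (derivedSeries ℝ L 1) z)) :
    Decomposable L := by
  set D := derivedSeries ℝ L 1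
  obtain ⟨⟨x, hx⟩, hzx⟩ := hz ⟨⁅y, z⁆, LieSubmodule.lie_mem_lie (LieSubmodule.mem_top y)
    (LieSubmodule.mem_top z)⟩
  replace hzx : ⁅z, x⁆ = ⁅y, z⁆ := congrArg Subtype.val hzx
  have hc : y + x ∈ center ℝ L := mem_center_of_lie_eq_zero hsup
    (by rw [add_lie, ← lie_skew x z, hzx, add_neg_cancel])
    (by rw [add_lie, lie_self, ← lie_skew, hy x hx, neg_zero, zero_add])
    fun _ hh => by
      rw [add_lie, hy _ hh, lie_eq_zero_of_derivedSeries_two_eq_bot hab hx hh, add_zero]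
  set p := ℝ ∙ (y + x)
  set q := ℝ ∙ z ⊔ D.toSubmodule
  have hcodisj : Codisjoint p q := by
    rw [codisjoint_iff, eq_top_iff, ← hsup]
    refine sup_le (sup_le (le_sup_of_le_right le_sup_left) ?_) (le_sup_of_le_right le_sup_right)
    rw [Submodule.span_singleton_le_iff_mem, show y = (y + x) - x by abel]
    exact sub_mem (Submodule.mem_sup_left (Submodule.mem_span_singleton_self _))
      (Submodule.mem_sup_right (Submodule.mem_sup_right hx))
  have hp : finrank ℝ p ≤ 1 := (finrank_span_le_card _).trans (by simp)
  have hq : finrank ℝ q ≤ 1 + finrank ℝ D :=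
    (Submodule.finrank_add_le_finrank_add_finrank _ _).trans
      (Nat.add_le_add_right ((finrank_span_le_card _).trans (by simp)) _)
  have hpq := Submodule.isCompl_of_codisjoint_of_finrank_add_le hcodisj (by omega)
  have hsum := Submodule.finrank_add_eq_of_isCompl hpq
  refine decomposable_of_isCompl_of_le_center (p := p) (q := q)
    ((Submodule.span_singleton_le_iff_mem _ _).2 hc) le_sup_right hpq ?_ ?_ <;>
    rw [Ne, ← Submodule.finrank_eq_zero] <;> omega

end DerivedAbelianCodimTwo

theorem stmt17_general (n : ℕ) (L : Type) [LieRing L] [LieAlgebra ℝ L]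
    [FiniteDimensional ℝ L] [LieAlgebra.IsSolvable L]
    (hdim : Module.finrank ℝ L = n + 2)
    (H : LieIdeal ℝ L) (hH : H = LieAlgebra.derivedSeries ℝ L 1)
    (hab : IsLieAbelian ↥H)
    (hHdim : Module.finrank ℝ ↥H = n)
    (z y : L)
    (hsup : Submodule.span ℝ {z} ⊔ Submodule.span ℝ {y} ⊔ H.toSubmodule = ⊤)
    (hy : ∀ x ∈ H, ⁅y, x⁆ = 0) :
    Decomposable L ↔
      Function.Bijective (fun x : ↥H => (⟨⁅z, (x : L)⁆, H.lie_mem x.2⟩ : ↥H)) := by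
  subst hH
  have hcodim : finrank ℝ L = finrank ℝ (derivedSeries ℝ L 1) + 2 := by omega
  have hab₂ : derivedSeries ℝ L 2 = ⊥ := (abelian_iff_derived_succ_eq_bot ⊤ 1).1 hab
  change Decomposable L ↔ Function.Bijective (LieModule.toEnd ℝ L (derivedSeries ℝ L 1) z)
  constructor
  · intro hL
    have hinj := injective_toEnd_of_decomposable hL hcodim hab₂ hsup hy
    exact ⟨hinj, LinearMap.injective_iff_surjective.1 hinj⟩
  · exact fun hbij => decomposable_of_surjective_toEnd hcodim hab₂ hsup hy hbij.2

/-- Let `L` be a solvable real Lie algebra of dimension `n + 2` (`n ≥ 2`) whose derived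
algebra `H := [L,L]` is abelian of dimension `n`, and `z, y ∈ L` with `L = ℝz ⊕ ℝy ⊕ H`
as vector spaces and `⁅y, H⁆ = 0`. Then `L` is decomposable iff the endomorphism
`x ↦ ⁅z, x⁆` of `H` is bijective. -/
theorem stmt17 (n : ℕ) (hn : 2 ≤ n) (L : Type) [LieRing L] [LieAlgebra ℝ L]
    [FiniteDimensional ℝ L] [LieAlgebra.IsSolvable L]
    (hdim : Module.finrank ℝ L = n + 2)
    (H : LieIdeal ℝ L) (hH : H = LieAlgebra.derivedSeries ℝ L 1)
    (hab : IsLieAbelian ↥H)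
    (hHdim : Module.finrank ℝ ↥H = n)
    (z y : L)
    (hsup : Submodule.span ℝ {z} ⊔ Submodule.span ℝ {y} ⊔ H.toSubmodule = ⊤)
    (hzind : Submodule.span ℝ {z} ⊓ (Submodule.span ℝ {y} ⊔ H.toSubmodule) = ⊥)
    (hyind : Submodule.span ℝ {y} ⊓ H.toSubmodule = ⊥)
    (hy : ∀ x ∈ H, ⁅y, x⁆ = 0) :
    Decomposable L ↔
      Function.Bijective (fun x : ↥H => (⟨⁅z, (x : L)⁆, H.lie_mem x.2⟩ : ↥H)) :=
  stmt17_general n L hdim H hH hab hHdim z y hsup hy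
end

section
/- Let n ≥ 2 and, for i = 1, 2, let Li be a solvable real Lie algebra with dim Li = n + 2 whose derived algebra Hi := [Li, Li] is nilpotent of dimension n, and let zi, yi ∈ Li be such that Li = ℝzi ⊕ ℝyi ⊕ Hi as vector spaces and [yi, x] = 0 for all x ∈ Hi. Set Ki := ℝyi ⊕ Hi (a Lie ideal of Li of codimension 1). Then L1 and L2 are isomorphic as Lie algebras if and only if there exist a Lie algebra isomorphism σ : K1 → K2, a scalar α ∈ ℝ ∖ {0}, and an element v ∈ K2 such that σ([z1, x]) = α·[z2, σ(x)] + [v, σ(x)] for all x ∈ K1. -/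
/-!
Every element of `Lᵢ` centralizing `Hᵢ` lies in `Kᵢ`: if `a zᵢ + w` with `a ≠ 0`, `w ∈ Kᵢ` did,
then `⁅zᵢ, Hᵢ⁆ ⊆ ⁅Hᵢ, Hᵢ⁆`, hence `Hᵢ = ⁅Lᵢ, Lᵢ⁆ ⊆ ℝ⁅zᵢ, yᵢ⁆ + ⁅Hᵢ, Hᵢ⁆`; but a nilpotent Lie algebra
spanned by one element modulo its derived algebra is abelian, so `dim Hᵢ ≤ 1 < n`. Thus `Kᵢ` is
`Hᵢ` plus the centralizer of `Hᵢ`, which every isomorphism `e : L₁ ≃ L₂` respects, and writing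
`e z₁ = α z₂ + v` with `v ∈ K₂` gives the relation. Conversely, `z₁ ↦ α z₂ + v` together with `σ`
on `K₁` is a linear isomorphism, and the relation says precisely that it preserves `⁅z₁, K₁⁆`.
-/

open Module Submodule LieAlgebra

section LinearAlgebra

variable {𝕜 V V' : Type*} [Field 𝕜] [AddCommGroup V] [Module 𝕜 V] [AddCommGroup V'] [Module 𝕜 V']

theorem exists_linearEquiv_extend_of_isCoatom {p : Submodule 𝕜 V} {p' : Submodule 𝕜 V'}
    (hp : IsCoatom p) (hp' : IsCoatom p') {z : V} {z' : V'} (hz : z ∉ p) (hz' : z' ∉ p')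
    (σ : p ≃ₗ[𝕜] p') : ∃ φ : V ≃ₗ[𝕜] V', φ z = z' ∧ ∀ x : p, φ x = σ x := by
  have hz0 : z ≠ 0 := fun h => hz (h ▸ p.zero_mem)
  have hz0' : z' ≠ 0 := fun h => hz' (h ▸ p'.zero_mem)
  have hc := isCompl_span_singleton_of_isCoatom_of_notMem hp hz
  have hc' := isCompl_span_singleton_of_isCoatom_of_notMem hp' hz'
  let τ : (𝕜 ∙ z) ≃ₗ[𝕜] (𝕜 ∙ z') := LinearEquiv.coord 𝕜 V z hz0 ≪≫ₗ
    LinearEquiv.toSpanNonzeroSingleton 𝕜 V' z' hz0'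
  refine ⟨(prodEquivOfIsCompl _ _ hc).symm ≪≫ₗ σ.prodCongr τ ≪≫ₗ prodEquivOfIsCompl _ _ hc',
    ?_, fun x => ?_⟩
  · have := prodEquivOfIsCompl_symm_apply_right _ _ hc ⟨z, mem_span_singleton_self z⟩
    simp [this, τ, LinearEquiv.coord_self]
  · simp [prodEquivOfIsCompl_symm_apply_left _ _ hc x]

theorem notMem_span_singleton_sup_of_finrank_eq {V : Type*} [AddCommGroup V] [Module 𝕜 V]
    [FiniteDimensional 𝕜 V] {z y : V} {H : Submodule 𝕜 V} (hsup : 𝕜 ∙ z ⊔ 𝕜 ∙ y ⊔ H = ⊤)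
    (hdim : finrank 𝕜 V = finrank 𝕜 H + 2) : z ∉ 𝕜 ∙ y ⊔ H := by
  intro hz
  rw [sup_assoc, sup_eq_right.mpr ((span_singleton_le_iff_mem _ _).mpr hz)] at hsup
  have hle := finrank_add_le_finrank_add_finrank (𝕜 ∙ y) H
  have hy : finrank 𝕜 (𝕜 ∙ y) ≤ 1 := (finrank_span_le_card _).trans (by simp)
  rw [hsup, finrank_top] at hle
  omega

end LinearAlgebra

section LieRing

variable {R L L' : Type*} [CommRing R] [LieRing L] [LieAlgebra R L] [LieRing L'] [LieAlgebra R L']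

theorem LinearMap.map_lie_of_span_eq_top {s : Set L} (φ : L →ₗ[R] L') (hs : span R s = ⊤)
    (h : ∀ a ∈ s, ∀ b ∈ s, φ ⁅a, b⁆ = ⁅φ a, φ b⁆) (u w : L) : φ ⁅u, w⁆ = ⁅φ u, φ w⁆ := by
  have key : (LieModule.toEnd R L L : L →ₗ[R] L →ₗ[R] L).compr₂ φ =
      (LieModule.toEnd R L' L' : L' →ₗ[R] L' →ₗ[R] L').compl₁₂ φ φ :=
    LinearMap.ext_on hs fun a ha => LinearMap.ext_on hs fun b hb => by simpa using h a ha b hb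
  simpa using LinearMap.congr_fun₂ key u w

theorem derivedSeries_one_le_of_span_eq_top {s : Set L} (hs : span R s = ⊤) {S : Submodule R L}
    (h : ∀ a ∈ s, ∀ b ∈ s, ⁅a, b⁆ ∈ S) : (derivedSeries R L 1).toSubmodule ≤ S := by
  have key : (LieModule.toEnd R L L : L →ₗ[R] L →ₗ[R] L).compr₂ S.mkQ = 0 :=
    LinearMap.ext_on hs fun a ha => LinearMap.ext_on hs fun b hb => by
      simpa [Submodule.Quotient.mk_eq_zero] using h a ha b hb
  refine (coe_derivedSeries_one_eq R L).le.trans (span_le.mpr ?_)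
  rintro _ ⟨u, w, rfl⟩
  simpa [Submodule.Quotient.mk_eq_zero] using LinearMap.congr_fun₂ key u w

theorem LieEquiv.apply_mem_derivedSeries (e : L ≃ₗ⁅R⁆ L') {k : ℕ} {x : L}
    (hx : x ∈ derivedSeries R L k) : e x ∈ derivedSeries R L' k :=
  LieIdeal.derivedSeries_map_le (f := (e : L →ₗ⁅R⁆ L')) k (LieIdeal.mem_map hx)

theorem LieEquiv.apply_mem_of_mem_span_singleton_sup_derivedSeries (e : L ≃ₗ⁅R⁆ L') {y : L}
    (hy : ∀ h ∈ derivedSeries R L 1, ⁅y, h⁆ = 0) {S : Submodule R L'}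
    (hD : (derivedSeries R L' 1).toSubmodule ≤ S)
    (hC : ∀ x, (∀ h ∈ derivedSeries R L' 1, ⁅x, h⁆ = 0) → x ∈ S) {x : L}
    (hx : x ∈ R ∙ y ⊔ (derivedSeries R L 1).toSubmodule) : e x ∈ S := by
  obtain ⟨b, h, hh, rfl⟩ : ∃ b : R, ∃ h ∈ derivedSeries R L 1, b • y + h = x := by
    simpa [mem_sup, mem_span_singleton] using hx
  have hey : e y ∈ S := hC _ fun h hh => by
    rw [← e.apply_symm_apply h, ← e.map_lie, hy _ (e.symm.apply_mem_derivedSeries hh), map_zero]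
  rw [map_add, map_smul]
  exact add_mem (S.smul_mem b hey) (hD (e.apply_mem_derivedSeries hh))

theorem LieAlgebra.derivedSeries_one_eq_bot_of_span_singleton_sup_eq_top
    [LieModule.IsNilpotent L L] {x : L}
    (hx : R ∙ x ⊔ (derivedSeries R L 1).toSubmodule = ⊤) : derivedSeries R L 1 = ⊥ := by
  set D := derivedSeries R L 1
  have hgen : span R ({x} ∪ (D.toSubmodule : Set L)) = ⊤ := by rwa [span_union, span_eq]
  have hD : ∀ N : LieIdeal R L, D ≤ N → D ≤ ⁅(⊤ : LieIdeal R L), N⁆ := fun N hN =>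
    derivedSeries_one_le_of_span_eq_top hgen <| by
      rintro a ha b (rfl | hb)
      · rcases ha with rfl | ha
        · simp
        · rw [← lie_skew]
          exact neg_mem (LieSubmodule.lie_mem_lie trivial (hN ha))
      · exact LieSubmodule.lie_mem_lie trivial (hN hb)
  have hlcs : ∀ k, D ≤ LieModule.lowerCentralSeries R L L k := by
    intro k
    induction k with
    | zero => exact le_top
    | succ k ih =>
      rw [LieModule.lowerCentralSeries_succ]
      exact hD _ ih
  obtain ⟨k, hk⟩ := LieModule.IsNilpotent.nilpotent R L L
  exact le_bot_iff.mp (hk ▸ hlcs k)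

end LieRing

section LieField

variable {𝕜 L L' : Type*} [Field 𝕜] [LieRing L] [LieAlgebra 𝕜 L] [LieRing L'] [LieAlgebra 𝕜 L']

theorem nonempty_lieEquiv_of_isCoatom {I : LieIdeal 𝕜 L} {I' : LieIdeal 𝕜 L'}
    (hI : IsCoatom I.toSubmodule) (hI' : IsCoatom I'.toSubmodule) {z : L} {z' : L'}
    (hz : z ∉ I) (hz' : z' ∉ I') (σ : I ≃ₗ⁅𝕜⁆ I')
    (hσ : ∀ x : I, (σ ⟨⁅z, x⁆, I.lie_mem x.2⟩ : L') = ⁅z', σ x⁆) : Nonempty (L ≃ₗ⁅𝕜⁆ L') := by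
  obtain ⟨φ, hφz, hφI⟩ := exists_linearEquiv_extend_of_isCoatom hI hI' hz hz' σ.toLinearEquiv
  have hgen : span 𝕜 ({z} ∪ (I.toSubmodule : Set L)) = ⊤ := by
    rw [span_union, span_eq]
    exact hI.2 _ (covBy_span_singleton_sup hz).1
  have hφ : ∀ x (hx : x ∈ I), φ x = σ ⟨x, hx⟩ := fun x hx => hφI ⟨x, hx⟩
  refine ⟨{ φ with map_lie' := fun {u w} => φ.toLinearMap.map_lie_of_span_eq_top hgen ?_ u w }⟩
  simp only [LinearEquiv.coe_coe]
  have hzI : ∀ x (hx : x ∈ I), φ ⁅z, x⁆ = ⁅φ z, φ x⁆ := fun x hx => by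
    rw [hφz, hφ x hx, hφ _ (I.lie_mem hx)]
    simpa using hσ ⟨x, hx⟩
  have hII : ∀ x (hx : x ∈ I) y (hy : y ∈ I), φ ⁅x, y⁆ = ⁅φ x, φ y⁆ := fun x hx y hy => by
    rw [hφ x hx, hφ y hy, hφ _ (I.lie_mem hy)]
    exact congrArg Subtype.val (σ.map_lie ⟨x, hx⟩ ⟨y, hy⟩)
  rintro a (rfl | ha) b (rfl | hb)
  · simp
  · exact hzI b hb
  · rw [← lie_skew, map_neg, hzI a ha, lie_skew]
  · exact hII a ha b hb

theorem exists_lieEquiv_smul_add_of_map_eq (e : L ≃ₗ⁅𝕜⁆ L') {I : LieIdeal 𝕜 L}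
    {I' : LieIdeal 𝕜 L'} (he : I.toLieSubalgebra.map e = I'.toLieSubalgebra) {z : L} (hz : z ∉ I)
    {z' : L'} (hz' : 𝕜 ∙ z' ⊔ I'.toSubmodule = ⊤) :
    ∃ (σ : I ≃ₗ⁅𝕜⁆ I') (α : 𝕜) (v : I'), α ≠ 0 ∧
      ∀ x : I, (σ ⟨⁅z, x⁆, I.lie_mem x.2⟩ : L') = α • ⁅z', (σ x : L')⁆ + ⁅(v : L'), σ x⁆ := by
  have hez : e z ∈ 𝕜 ∙ z' ⊔ I'.toSubmodule := hz' ▸ mem_top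
  obtain ⟨α, v, hv, hez⟩ : ∃ α : 𝕜, ∃ v ∈ I', α • z' + v = e z := by
    simpa [mem_sup, mem_span_singleton] using hez
  refine ⟨e.ofSubalgebras _ _ he, α, ⟨v, hv⟩, ?_, fun x => ?_⟩
  · rintro rfl
    obtain ⟨w, hw, hwz⟩ : e z ∈ I.toLieSubalgebra.map e := by
      rw [he, ← hez, zero_smul, zero_add]; exact hv
    exact hz (e.injective hwz ▸ hw)
  · show e ⁅z, (x : L)⁆ = α • ⁅z', e x⁆ + ⁅v, e x⁆
    rw [e.map_lie, ← hez, add_lie, smul_lie]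

theorem LieIdeal.finrank_le_one_of_le_span_singleton_sup {H : LieIdeal 𝕜 L}
    [LieModule.IsNilpotent H H] {w : L} (hw : w ∈ H)
    (hH : H.toSubmodule ≤ 𝕜 ∙ w ⊔ (⁅H, H⁆ : LieIdeal 𝕜 L).toSubmodule) : finrank 𝕜 H ≤ 1 := by
  have hgen : 𝕜 ∙ (⟨w, hw⟩ : H) ⊔ (derivedSeries 𝕜 H 1).toSubmodule = ⊤ := by
    refine eq_top_iff.mpr fun h _ => ?_
    obtain ⟨c, d, hd, hcd⟩ : ∃ c : 𝕜, ∃ d ∈ (⁅H, H⁆ : LieIdeal 𝕜 L), c • w + d = h := by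
      simpa [mem_sup, mem_span_singleton] using hH h.2
    have hdH : d ∈ H := LieSubmodule.lie_le_right H H hd
    refine mem_sup.mpr ⟨c • ⟨w, hw⟩, smul_mem _ c (mem_span_singleton_self _), ⟨d, hdH⟩, ?_,
      Subtype.ext hcd⟩
    rw [LieSubmodule.mem_toSubmodule, LieIdeal.derivedSeries_eq_derivedSeriesOfIdeal_comap]
    simpa using hd
  rw [derivedSeries_one_eq_bot_of_span_singleton_sup_eq_top hgen, LieSubmodule.bot_toSubmodule,
    sup_bot_eq] at hgen
  rw [← finrank_top, ← hgen]
  exact (finrank_span_le_card _).trans (by simp)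

theorem mem_span_singleton_sup_derivedSeries_of_forall_lie_eq_zero
    [LieModule.IsNilpotent (derivedSeries 𝕜 L 1) (derivedSeries 𝕜 L 1)]
    (hdim : 2 ≤ finrank 𝕜 (derivedSeries 𝕜 L 1)) {z y : L}
    (hsup : 𝕜 ∙ z ⊔ 𝕜 ∙ y ⊔ (derivedSeries 𝕜 L 1).toSubmodule = ⊤)
    (hy : ∀ h ∈ derivedSeries 𝕜 L 1, ⁅y, h⁆ = 0) {x : L}
    (hx : ∀ h ∈ derivedSeries 𝕜 L 1, ⁅x, h⁆ = 0) :
    x ∈ 𝕜 ∙ y ⊔ (derivedSeries 𝕜 L 1).toSubmodule := by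
  set H := derivedSeries 𝕜 L 1
  by_contra hxK
  have hx' : x ∈ 𝕜 ∙ z ⊔ (𝕜 ∙ y ⊔ H.toSubmodule) := by rw [← sup_assoc, hsup]; exact mem_top
  obtain ⟨a, w, hw, rfl⟩ : ∃ a : 𝕜, ∃ w ∈ 𝕜 ∙ y ⊔ H.toSubmodule, a • z + w = x := by
    simpa [mem_sup, mem_span_singleton] using hx'
  obtain ⟨b, h₀, hh₀, rfl⟩ : ∃ b : 𝕜, ∃ h₀ ∈ H, b • y + h₀ = w := by
    simpa [mem_sup, mem_span_singleton] using hw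
  have ha : a ≠ 0 := by
    rintro rfl
    exact hxK (by simpa using hw)
  have hzH : ∀ h ∈ H, ⁅z, h⁆ ∈ ⁅H, H⁆ := by
    intro h hh
    have hazh : a • ⁅z, h⁆ = -⁅h₀, h⁆ := by
      have := hx h hh
      rw [add_lie, add_lie, smul_lie, smul_lie, hy h hh, smul_zero, zero_add] at this
      exact eq_neg_of_add_eq_zero_left this
    rw [← LieSubmodule.mem_toSubmodule, ← smul_mem_iff _ ha, hazh]
    exact neg_mem (LieSubmodule.lie_mem_lie hh₀ hh)
  have hzy : ⁅z, y⁆ ∈ H :=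
    (coe_derivedSeries_one_eq 𝕜 L).ge (subset_span ⟨z, y, rfl⟩)
  have hgen : span 𝕜 ({z} ∪ {y} ∪ (H.toSubmodule : Set L)) = ⊤ := by
    rwa [span_union, span_union, span_eq]
  have hHS : H.toSubmodule ≤ 𝕜 ∙ ⁅z, y⁆ ⊔ (⁅H, H⁆ : LieIdeal 𝕜 L).toSubmodule := by
    refine derivedSeries_one_le_of_span_eq_top hgen ?_
    rintro u ((rfl | rfl) | hu) v ((rfl | rfl) | hv)
    · simp
    · exact mem_sup_left (mem_span_singleton_self _)
    · exact mem_sup_right (hzH v hv)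
    · rw [← lie_skew u v]
      exact neg_mem (mem_sup_left (mem_span_singleton_self _))
    · simp
    · simp [hy v hv]
    · rw [← lie_skew u v]
      exact neg_mem (mem_sup_right (hzH u hu))
    · rw [← lie_skew u v, hy u hu, neg_zero]
      exact zero_mem _
    · exact mem_sup_right (LieSubmodule.lie_mem_lie hu hv)
  have := LieIdeal.finrank_le_one_of_le_span_singleton_sup hzy hHS
  omega

end LieField

theorem stmt18_general (n : ℕ) (hn : 2 ≤ n)
    (L₁ : Type) [LieRing L₁] [LieAlgebra ℝ L₁] [FiniteDimensional ℝ L₁]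
    (L₂ : Type) [LieRing L₂] [LieAlgebra ℝ L₂] [FiniteDimensional ℝ L₂]
    (hdim₁ : Module.finrank ℝ L₁ = n + 2) (hdim₂ : Module.finrank ℝ L₂ = n + 2)
    (H₁ : LieIdeal ℝ L₁) (hH₁ : H₁ = LieAlgebra.derivedSeries ℝ L₁ 1)
    (H₂ : LieIdeal ℝ L₂) (hH₂ : H₂ = LieAlgebra.derivedSeries ℝ L₂ 1)
    (hnil₁ : LieModule.IsNilpotent ↥H₁ ↥H₁) (hnil₂ : LieModule.IsNilpotent ↥H₂ ↥H₂)
    (hHdim₁ : Module.finrank ℝ ↥H₁ = n) (hHdim₂ : Module.finrank ℝ ↥H₂ = n)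
    (z₁ y₁ : L₁) (z₂ y₂ : L₂)
    (hsup₁ : Submodule.span ℝ {z₁} ⊔ Submodule.span ℝ {y₁} ⊔ H₁.toSubmodule = ⊤)
    (hsup₂ : Submodule.span ℝ {z₂} ⊔ Submodule.span ℝ {y₂} ⊔ H₂.toSubmodule = ⊤)
    (hy₁ : ∀ x ∈ H₁, ⁅y₁, x⁆ = 0) (hy₂ : ∀ x ∈ H₂, ⁅y₂, x⁆ = 0)
    (K₁ : LieIdeal ℝ L₁) (hK₁ : K₁.toSubmodule = Submodule.span ℝ {y₁} ⊔ H₁.toSubmodule)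
    (K₂ : LieIdeal ℝ L₂) (hK₂ : K₂.toSubmodule = Submodule.span ℝ {y₂} ⊔ H₂.toSubmodule) :
    Nonempty (L₁ ≃ₗ⁅ℝ⁆ L₂) ↔
      ∃ (σ : ↥K₁ ≃ₗ⁅ℝ⁆ ↥K₂) (α : ℝ) (v : ↥K₂), α ≠ 0 ∧
        ∀ x : ↥K₁,
          ((σ ⟨⁅z₁, (x : L₁)⁆, K₁.lie_mem x.2⟩ : ↥K₂) : L₂)
            = α • ⁅z₂, ((σ x : ↥K₂) : L₂)⁆ + ⁅((v : L₂)), ((σ x : ↥K₂) : L₂)⁆ := by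
  subst hH₁ hH₂
  have hK₁' := SetLike.ext_iff.mp hK₁
  have hK₂' := SetLike.ext_iff.mp hK₂
  have hz₁ : z₁ ∉ K₁ := fun h => notMem_span_singleton_sup_of_finrank_eq hsup₁
    (by rw [hdim₁, ← hHdim₁]; rfl) ((hK₁' z₁).mp h)
  have hz₂ : z₂ ∉ K₂ := fun h => notMem_span_singleton_sup_of_finrank_eq hsup₂
    (by rw [hdim₂, ← hHdim₂]; rfl) ((hK₂' z₂).mp h)
  have htop₁ : ℝ ∙ z₁ ⊔ K₁.toSubmodule = ⊤ := by rw [hK₁, ← sup_assoc, hsup₁]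
  have htop₂ : ℝ ∙ z₂ ⊔ K₂.toSubmodule = ⊤ := by rw [hK₂, ← sup_assoc, hsup₂]
  have hC₁ (x : L₁) := mem_span_singleton_sup_derivedSeries_of_forall_lie_eq_zero (x := x)
    (hHdim₁ ▸ hn) hsup₁ hy₁
  have hC₂ (x : L₂) := mem_span_singleton_sup_derivedSeries_of_forall_lie_eq_zero (x := x)
    (hHdim₂ ▸ hn) hsup₂ hy₂
  have hK₁₂ (e : L₁ ≃ₗ⁅ℝ⁆ L₂) (x : L₁) (hx : x ∈ K₁) : e x ∈ K₂ := (hK₂' _).mpr <|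
    e.apply_mem_of_mem_span_singleton_sup_derivedSeries hy₁ le_sup_right hC₂ ((hK₁' x).mp hx)
  have hK₂₁ (e : L₂ ≃ₗ⁅ℝ⁆ L₁) (x : L₂) (hx : x ∈ K₂) : e x ∈ K₁ := (hK₁' _).mpr <|
    e.apply_mem_of_mem_span_singleton_sup_derivedSeries hy₂ le_sup_right hC₁ ((hK₂' x).mp hx)
  constructor
  · rintro ⟨e⟩
    refine exists_lieEquiv_smul_add_of_map_eq e ?_ hz₁ htop₂
    ext x
    exact ⟨fun ⟨w, hw, hwx⟩ => hwx ▸ hK₁₂ e w hw,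
      fun hx => ⟨e.symm x, hK₂₁ e.symm x hx, e.apply_symm_apply x⟩⟩
  · rintro ⟨σ, α, v, hα, hσ⟩
    have hz₂' : α • z₂ + v ∉ K₂ := by
      rwa [add_mem_cancel_right v.2, ← LieSubmodule.mem_toSubmodule, smul_mem_iff _ hα]
    exact nonempty_lieEquiv_of_isCoatom (htop₁ ▸ covBy_span_singleton_sup hz₁).isCoatom
      (htop₂ ▸ covBy_span_singleton_sup hz₂).isCoatom hz₁ hz₂' σ
      (by simpa [add_lie, smul_lie] using hσ)

/-- For `i = 1, 2`, let `Lᵢ` be a solvable real Lie algebra of dimension `n + 2` (`n ≥ 2`)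
whose derived algebra `Hᵢ := [Lᵢ,Lᵢ]` is nilpotent of dimension `n`, with `zᵢ, yᵢ ∈ Lᵢ`
such that `Lᵢ = ℝzᵢ ⊕ ℝyᵢ ⊕ Hᵢ` as vector spaces and `⁅yᵢ, Hᵢ⁆ = 0`; set
`Kᵢ := ℝyᵢ ⊕ Hᵢ` (a codimension-one Lie ideal). Then `L₁ ≅ L₂` iff there are a Lie
algebra isomorphism `σ : K₁ → K₂`, a nonzero scalar `α` and `v ∈ K₂` such that
`σ ⁅z₁, x⁆ = α • ⁅z₂, σ x⁆ + ⁅v, σ x⁆` for all `x ∈ K₁`. -/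
theorem stmt18 (n : ℕ) (hn : 2 ≤ n)
    (L₁ : Type) [LieRing L₁] [LieAlgebra ℝ L₁] [FiniteDimensional ℝ L₁]
    [LieAlgebra.IsSolvable L₁]
    (L₂ : Type) [LieRing L₂] [LieAlgebra ℝ L₂] [FiniteDimensional ℝ L₂]
    [LieAlgebra.IsSolvable L₂]
    (hdim₁ : Module.finrank ℝ L₁ = n + 2) (hdim₂ : Module.finrank ℝ L₂ = n + 2)
    (H₁ : LieIdeal ℝ L₁) (hH₁ : H₁ = LieAlgebra.derivedSeries ℝ L₁ 1)
    (H₂ : LieIdeal ℝ L₂) (hH₂ : H₂ = LieAlgebra.derivedSeries ℝ L₂ 1)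
    (hnil₁ : LieModule.IsNilpotent ↥H₁ ↥H₁) (hnil₂ : LieModule.IsNilpotent ↥H₂ ↥H₂)
    (hHdim₁ : Module.finrank ℝ ↥H₁ = n) (hHdim₂ : Module.finrank ℝ ↥H₂ = n)
    (z₁ y₁ : L₁) (z₂ y₂ : L₂)
    (hsup₁ : Submodule.span ℝ {z₁} ⊔ Submodule.span ℝ {y₁} ⊔ H₁.toSubmodule = ⊤)
    (hzind₁ : Submodule.span ℝ {z₁} ⊓ (Submodule.span ℝ {y₁} ⊔ H₁.toSubmodule) = ⊥)
    (hyind₁ : Submodule.span ℝ {y₁} ⊓ H₁.toSubmodule = ⊥)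
    (hsup₂ : Submodule.span ℝ {z₂} ⊔ Submodule.span ℝ {y₂} ⊔ H₂.toSubmodule = ⊤)
    (hzind₂ : Submodule.span ℝ {z₂} ⊓ (Submodule.span ℝ {y₂} ⊔ H₂.toSubmodule) = ⊥)
    (hyind₂ : Submodule.span ℝ {y₂} ⊓ H₂.toSubmodule = ⊥)
    (hy₁ : ∀ x ∈ H₁, ⁅y₁, x⁆ = 0) (hy₂ : ∀ x ∈ H₂, ⁅y₂, x⁆ = 0)
    (K₁ : LieIdeal ℝ L₁) (hK₁ : K₁.toSubmodule = Submodule.span ℝ {y₁} ⊔ H₁.toSubmodule)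
    (K₂ : LieIdeal ℝ L₂) (hK₂ : K₂.toSubmodule = Submodule.span ℝ {y₂} ⊔ H₂.toSubmodule) :
    Nonempty (L₁ ≃ₗ⁅ℝ⁆ L₂) ↔
      ∃ (σ : ↥K₁ ≃ₗ⁅ℝ⁆ ↥K₂) (α : ℝ) (v : ↥K₂), α ≠ 0 ∧
        ∀ x : ↥K₁,
          ((σ ⟨⁅z₁, (x : L₁)⁆, K₁.lie_mem x.2⟩ : ↥K₂) : L₂)
            = α • ⁅z₂, ((σ x : ↥K₂) : L₂)⁆ + ⁅((v : L₂)), ((σ x : ↥K₂) : L₂)⁆ :=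
  stmt18_general n hn L₁ L₂ hdim₁ hdim₂ H₁ hH₁ H₂ hH₂ hnil₁ hnil₂ hHdim₁ hHdim₂ z₁ y₁ z₂ y₂ hsup₁
    hsup₂ hy₁ hy₂ K₁ hK₁ K₂ hK₂
end
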